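/- Let f : (0,∞) → ℝ be continuous with f(t) > 0 for t > 0, and suppose that for some p > 2 the map t ↦ f(t)/t^{p-1} is strictly increasing on (0,∞). Then the map t ↦ (F(t) f(t) t)/t^{p} is strictly increasing on (0,∞), where F(t) = ∫₀ᵗ f(s) ds. -/
import Mathlib

open MeasureTheory Set intervalIntegral

theorem stmt_5 (f F : ℝ → ℝ) (p : ℝ)
    (hcont : ContinuousOn f (Set.Ioi (0:ℝ)))
    (hpos : ∀ t > (0:ℝ), 0 < f t)
    (hp : 2 < p)
    (hGS : StrictMonoOn (fun t => f t / t ^ (p - 1)) (Set.Ioi (0:ℝ)))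
    (hF : ∀ t, F t = ∫ s in (0:ℝ)..t, f s) :
    StrictMonoOn (fun t => F t * f t * t / t ^ p) (Set.Ioi (0:ℝ)) := by
  have hp1 : (0:ℝ) < p - 1 := by linarith
  -- integrability of f on (0, t] for every t > 0
  have hint : ∀ t > (0:ℝ), IntervalIntegrable f volume 0 t := by
    intro t ht
    set C := f t / t ^ (p-1) with hC
    have hbound : ∀ s ∈ Ioc (0:ℝ) t, ‖f s‖ ≤ ‖C * s ^ (p-1)‖ := by
      intro s hs
      have hs0 : 0 < s := hs.1
      have h1 : f s / s ^ (p-1) ≤ C := by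
        rcases eq_or_lt_of_le hs.2 with h | h
        · rw [h]
        · exact le_of_lt (hGS hs0 ht h)
      have hsp : (0:ℝ) < s ^ (p-1) := Real.rpow_pos_of_pos hs0 _
      have hle : f s ≤ C * s ^ (p-1) := by
        rw [div_le_iff₀ hsp] at h1; linarith
      have hf0 : 0 ≤ f s := (hpos s hs0).le
      rw [Real.norm_of_nonneg hf0, Real.norm_of_nonneg (le_trans hf0 hle)]
      exact hle
    have hgcont : ContinuousOn (fun s : ℝ => C * s ^ (p-1)) (Icc 0 t) := by
      apply ContinuousOn.mul continuousOn_const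
      intro x hx
      exact (Real.continuousAt_rpow_const x (p-1) (Or.inr hp1.le)).continuousWithinAt
    have hg : IntegrableOn (fun s : ℝ => C * s ^ (p-1)) (Ioc 0 t) :=
      (hgcont.integrableOn_Icc).mono_set Ioc_subset_Icc_self
    have hmeas : AEStronglyMeasurable f (volume.restrict (Ioc 0 t)) :=
      (hcont.mono (fun x hx => hx.1)).aestronglyMeasurable measurableSet_Ioc
    have hI : IntegrableOn f (Ioc 0 t) :=
      Integrable.mono hg hmeas (ae_restrict_of_forall_mem measurableSet_Ioc hbound)
    exact (intervalIntegrable_iff_integrableOn_Ioc_of_le ht.le).mpr hI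
  have hFpos : ∀ t > (0:ℝ), 0 < F t := by
    intro t ht
    rw [hF t]
    exact intervalIntegral_pos_of_pos_on (hint t ht) (fun x hx => hpos x hx.1) ht
  have hFmono : ∀ s t : ℝ, 0 < s → s < t → F s < F t := by
    intro s t hs hst
    have ht : 0 < t := hs.trans hst
    have hst' : IntervalIntegrable f volume s t := by
      apply ContinuousOn.intervalIntegrable
      apply hcont.mono
      intro x hx
      rw [Set.uIcc_of_le hst.le] at hx
      exact lt_of_lt_of_le hs hx.1
    have hdiff : F t - F s = ∫ x in s..t, f x := by
      rw [hF, hF, intervalIntegral.integral_interval_sub_left (hint t ht) (hint s hs)]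
    have hposint : 0 < ∫ x in s..t, f x :=
      intervalIntegral_pos_of_pos_on hst'
        (fun x hx => hpos x (hs.trans hx.1)) hst
    linarith
  have key : ∀ u > (0:ℝ), F u * f u * u / u ^ p = F u * (f u / u ^ (p-1)) := by
    intro u hu
    have hup : u ^ p = u ^ (p-1) * u := by
      rw [show p = (p-1) + 1 by ring, Real.rpow_add hu, Real.rpow_one]
      ring_nf
    have h1 : u ^ (p-1) ≠ 0 := (Real.rpow_pos_of_pos hu _).ne'
    rw [hup]
    field_simp
  intro s hs t ht hst
  simp only
  rw [key s hs, key t ht]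
  calc F s * (f s / s ^ (p-1)) < F s * (f t / t ^ (p-1)) :=
        mul_lt_mul_of_pos_left (hGS hs ht hst) (hFpos s hs)
    _ ≤ F t * (f t / t ^ (p-1)) := by
        apply mul_le_mul_of_nonneg_right (hFmono s t hs hst).le
        exact div_nonneg (hpos t ht).le (Real.rpow_pos_of_pos ht _).le
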